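/- Suppose the smooth functions H, u : ℝ × ℝ → ℝ and the smooth bottom zb : ℝ → ℝ satisfy the Saint-Venant system: ∂t H + ∂x (H u) = 0 and ∂t (H u) + ∂x (H u²) + (g/2) ∂x (H²) = −g H ∂x zb. Then, with η := H + zb and E_h := H u²/2 + g H (η + zb)/2, the energy equality ∂t E_h + ∂x ( u ( E_h + g H²/2 ) ) = 0 holds identically. -/

import Mathlib

/-- Partial derivative in the space variable `x` of a function of `(x, t)`. -/
noncomputable def pdX (F : ℝ → ℝ → ℝ) (x t : ℝ) : ℝ := deriv (fun y => F y t) x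

/-- Partial derivative in the time variable `t` of a function of `(x, t)`. -/
noncomputable def pdT (F : ℝ → ℝ → ℝ) (x t : ℝ) : ℝ := deriv (fun s => F x s) t

lemma pdX_hasDerivAt {F : ℝ → ℝ → ℝ}
    (hF : ContDiff ℝ (⊤ : ℕ∞) (fun q : ℝ × ℝ => F q.1 q.2)) (x t : ℝ) :
    HasDerivAt (fun y => F y t) (pdX F x t) x := by
  have hd : DifferentiableAt ℝ (fun y => F y t) x := by
    have := ((hF.differentiable (by simp)).comp
      (differentiable_id.prodMk (differentiable_const t))) x
    simpa [Function.comp_def] using this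
  simpa [pdX] using hd.hasDerivAt

lemma pdT_hasDerivAt {F : ℝ → ℝ → ℝ}
    (hF : ContDiff ℝ (⊤ : ℕ∞) (fun q : ℝ × ℝ => F q.1 q.2)) (x t : ℝ) :
    HasDerivAt (fun s => F x s) (pdT F x t) t := by
  have hd : DifferentiableAt ℝ (fun s => F x s) t := by
    have := ((hF.differentiable (by simp)).comp
      ((differentiable_const x).prodMk differentiable_id)) t
    simpa [Function.comp_def] using this
  simpa [pdT] using hd.hasDerivAt

/-- Smooth solutions of the Saint-Venant system satisfy the energy equality
`∂t E_h + ∂x (u (E_h + g H²/2)) = 0` with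
`E_h := H u²/2 + g H (η + zb)/2` and `η := H + zb`. -/
theorem saint_venant_energy
    (g : ℝ) (hg : 0 < g)
    (H u : ℝ → ℝ → ℝ) (zb : ℝ → ℝ)
    (hH : ContDiff ℝ (⊤ : ℕ∞) (fun q : ℝ × ℝ => H q.1 q.2))
    (hu : ContDiff ℝ (⊤ : ℕ∞) (fun q : ℝ × ℝ => u q.1 q.2))
    (hzb : ContDiff ℝ (⊤ : ℕ∞) zb)
    (hmass : ∀ x t, pdT H x t + pdX (fun x t => H x t * u x t) x t = 0)
    (hmom : ∀ x t,
      pdT (fun x t => H x t * u x t) x t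
        + pdX (fun x t => H x t * (u x t) ^ 2) x t
        + g / 2 * pdX (fun x t => (H x t) ^ 2) x t
      = -(g * H x t * deriv zb x)) :
    ∀ x t,
      pdT (fun x t => H x t * (u x t) ^ 2 / 2
          + g * H x t * ((H x t + zb x) + zb x) / 2) x t
        + pdX (fun x t => u x t *
            ((H x t * (u x t) ^ 2 / 2
              + g * H x t * ((H x t + zb x) + zb x) / 2)
              + g * (H x t) ^ 2 / 2)) x t
      = 0 := by
  intro x t
  have hHx := pdX_hasDerivAt hH x t
  have hHt := pdT_hasDerivAt hH x t
  have hux := pdX_hasDerivAt hu x t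
  have hut := pdT_hasDerivAt hu x t
  have hzx : HasDerivAt zb (deriv zb x) x :=
    ((hzb.differentiable (by simp)) x).hasDerivAt
  -- expand the mass equation
  have e1 : pdX (fun x t => H x t * u x t) x t
      = pdX H x t * u x t + H x t * pdX u x t := by
    simpa [pdX, Pi.mul_def] using (hHx.mul hux).deriv
  -- expand the momentum equation pieces
  have e2 : pdT (fun x t => H x t * u x t) x t
      = pdT H x t * u x t + H x t * pdT u x t := by
    simpa [pdT, Pi.mul_def] using (hHt.mul hut).deriv
  have e3 : pdX (fun x t => H x t * (u x t) ^ 2) x t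
      = pdX H x t * u x t ^ 2 + H x t * (2 * u x t * pdX u x t) := by
    have := (hHx.mul (hux.pow 2)).deriv
    simp only [pdX, Pi.mul_def, Pi.pow_def] at this ⊢
    rw [this]; push_cast; ring
  have e4 : pdX (fun x t => (H x t) ^ 2) x t = 2 * H x t * pdX H x t := by
    have := (hHx.pow 2).deriv
    simp only [pdX, Pi.mul_def, Pi.pow_def] at this ⊢
    rw [this]; push_cast; ring
  -- expand the energy time derivative
  have hET := (((hHt.mul (hut.pow 2)).div_const 2).add
    ((((hHt.const_mul g).mul ((hHt.add_const (zb x)).add_const (zb x)))).div_const 2)).deriv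
  -- expand the flux space derivative
  have inner1 := (hHx.mul (hux.pow 2)).div_const 2
  have inner2 := (((hHx.const_mul g)).mul ((hHx.add hzx).add hzx)).div_const 2
  have inner3 := ((hHx.pow 2).const_mul g).div_const 2
  have hEX := (hux.mul ((inner1.add inner2).add inner3)).deriv
  have hm := hmass x t
  have hq := hmom x t
  rw [e1] at hm
  rw [e2, e3, e4] at hq
  simp only [pdT, pdX, Pi.mul_def, Pi.pow_def, Pi.add_def] at hET hEX hm hq ⊢
  rw [hET, hEX]
  push_cast
  linear_combination u x t * hq
    + (g * H x t + g * zb x - u x t ^ 2 / 2) * hm
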